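/- Eigenvalue estimate in the main vanishing theorem: let n ≥ 1, 0 ≤ k ≤ n, let p, q be integers with p + q ≥ n + k + 1, q ≥ k, p ≤ n, and let γ₁ ≤ γ₂ ≤ ... ≤ γ_n be real numbers with γ_j ≥ -1/(4n) for all j, γ_j < 1 for all j, and γ_j ≥ 1 - 1/(4n) for all j ≥ k+1. Then Σ_{i=1}^{q} γ_i - Σ_{j=p+1}^{n} γ_j ≥ (q + p - n - k) - (q-k)/(4n) - k/(4n) ≥ 1/2. -/

import Mathlib

/-!
Split the first sum at `k`: the `k` smallest eigenvalues are each at least `-1/(4n)` and the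
next `q - k` are each at least `1 - 1/(4n)`, while each of the `n - p` largest is below `1`.
The resulting bound is `(q + p - n - k) - q/(4n)`, and `q + p - n - k ≥ 1`, `q ≤ n` give `≥ 3/4`.
-/

open Finset

namespace Finset

variable {R : Type*} [Ring R] [PartialOrder R] [IsOrderedAddMonoid R] {f : ℕ → R} {a b : ℕ}
  {c : R}

theorem mul_le_sum_Ioc (hab : a ≤ b) (h : ∀ i ∈ Ioc a b, c ≤ f i) :
    ((b : R) - a) * c ≤ ∑ i ∈ Ioc a b, f i := by
  simpa [Nat.card_Ioc, nsmul_eq_mul, Nat.cast_sub hab] using card_nsmul_le_sum _ f c h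

theorem sum_Ioc_le_mul (hab : a ≤ b) (h : ∀ i ∈ Ioc a b, f i ≤ c) :
    ∑ i ∈ Ioc a b, f i ≤ ((b : R) - a) * c := by
  simpa [Nat.card_Ioc, nsmul_eq_mul, Nat.cast_sub hab] using sum_le_card_nsmul _ f c h

end Finset

theorem eigenvalue_estimate_general (n k p q : ℕ)
    (hpq : p + q ≥ n + k + 1) (hqk : q ≥ k) (hpn : p ≤ n) (hqn : q ≤ n)
    (γ : ℕ → ℝ)
    (hlow : ∀ j, 1 ≤ j → j ≤ n → γ j ≥ -1 / (4 * n))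
    (hup : ∀ j, 1 ≤ j → j ≤ n → γ j < 1)
    (hbig : ∀ j, k + 1 ≤ j → j ≤ n → γ j ≥ 1 - 1 / (4 * n)) :
    (∑ i ∈ Finset.Icc 1 q, γ i) - (∑ j ∈ Finset.Icc (p + 1) n, γ j) ≥
        ((q : ℝ) + p - n - k) - ((q : ℝ) - k) / (4 * n) - (k : ℝ) / (4 * n) ∧
      ((q : ℝ) + p - n - k) - ((q : ℝ) - k) / (4 * n) - (k : ℝ) / (4 * n) ≥ 1 / 2 := by
  rw [show Icc 1 q = Ioc 0 q from Icc_add_one_left_eq_Ioc 0 q, Icc_add_one_left_eq_Ioc,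
    ← sum_Ioc_consecutive γ k.zero_le hqk]
  have hsmall := mul_le_sum_Ioc k.zero_le fun i hi =>
    hlow i (mem_Ioc.1 hi).1 ((mem_Ioc.1 hi).2.trans (hqk.trans hqn))
  have hlarge := mul_le_sum_Ioc hqk fun i hi =>
    hbig i (mem_Ioc.1 hi).1 ((mem_Ioc.1 hi).2.trans hqn)
  have htop := sum_Ioc_le_mul hpn fun j hj =>
    (hup j (Nat.one_le_of_lt (mem_Ioc.1 hj).1) (mem_Ioc.1 hj).2).le
  rw [Nat.cast_zero, sub_zero] at hsmall
  constructor
  · calc _ = (k : ℝ) * (-1 / (4 * n)) + ((q : ℝ) - k) * (1 - 1 / (4 * n)) - ((n : ℝ) - p) * 1 := by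
          ring
      _ ≤ _ := sub_le_sub (add_le_add hsmall hlarge) htop
  · have hn : (0 : ℝ) < n := by exact_mod_cast (by omega : 0 < n)
    have hdiv : ((q : ℝ) - k) / (4 * n) + k / (4 * n) ≤ 1 / 4 := by
      rw [← add_div, sub_add_cancel, div_le_iff₀ (by positivity)]
      linarith [(Nat.cast_le (α := ℝ)).2 hqn]
    have hpq' : (n : ℝ) + k + 1 ≤ p + q := by exact_mod_cast hpq
    linarith

/-- The eigenvalue estimate in the main vanishing theorem. -/
theorem eigenvalue_estimate (n k p q : ℕ) (hn : 1 ≤ n) (hk : k ≤ n)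
    (hpq : p + q ≥ n + k + 1) (hqk : q ≥ k) (hpn : p ≤ n) (hqn : q ≤ n)
    (γ : ℕ → ℝ)
    (hmono : ∀ i j, 1 ≤ i → i ≤ j → j ≤ n → γ i ≤ γ j)
    (hlow : ∀ j, 1 ≤ j → j ≤ n → γ j ≥ -1 / (4 * n))
    (hup : ∀ j, 1 ≤ j → j ≤ n → γ j < 1)
    (hbig : ∀ j, k + 1 ≤ j → j ≤ n → γ j ≥ 1 - 1 / (4 * n)) :
    (∑ i ∈ Finset.Icc 1 q, γ i) - (∑ j ∈ Finset.Icc (p + 1) n, γ j) ≥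
        ((q : ℝ) + p - n - k) - ((q : ℝ) - k) / (4 * n) - (k : ℝ) / (4 * n) ∧
      ((q : ℝ) + p - n - k) - ((q : ℝ) - k) / (4 * n) - (k : ℝ) / (4 * n) ≥ 1 / 2 :=
  eigenvalue_estimate_general n k p q hpq hqk hpn hqn γ hlow hup hbig
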